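/- arXiv:1011.1615 — 2 statements merged into one kernel-verified Lean document; each statement's English description precedes it below -/
import Mathlib

section
/- Let θ₁, θ₂, θ₃ > 0 and set xᵢ = (θⱼ + θₖ − θᵢ)/2 for {i,j,k} = {1,2,3}. Then the 3×3 symmetric matrix M with diagonal entries −(x₁+x₂+x₃) and off-diagonal entries M_{12}=x₃, M_{13}=x₂, M_{23}=x₁ is negative definite. -/
open Matrix

theorem stmt5 (θ₁ θ₂ θ₃ : ℝ) (h1 : 0 < θ₁) (h2 : 0 < θ₂) (h3 : 0 < θ₃) :
    let x₁ := (θ₂ + θ₃ - θ₁) / 2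
    let x₂ := (θ₃ + θ₁ - θ₂) / 2
    let x₃ := (θ₁ + θ₂ - θ₃) / 2
    let M : Matrix (Fin 3) (Fin 3) ℝ :=
      !![-(x₁ + x₂ + x₃), x₃, x₂;
         x₃, -(x₁ + x₂ + x₃), x₁;
         x₂, x₁, -(x₁ + x₂ + x₃)]
    ∀ v : Fin 3 → ℝ, v ≠ 0 → v ⬝ᵥ (M *ᵥ v) < 0 := by
  intro x₁ x₂ x₃ M v hv
  set a := v 0 - v 1 - v 2 with ha
  set b := v 1 - v 0 - v 2 with hb
  set c := v 2 - v 0 - v 1 with hc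
  have habc : ¬ (a = 0 ∧ b = 0 ∧ c = 0) := by
    rintro ⟨e1, e2, e3⟩
    apply hv
    funext i
    fin_cases i <;> simp <;> linarith
  have hS : 0 < θ₁ * a ^ 2 + θ₂ * b ^ 2 + θ₃ * c ^ 2 := by
    by_cases hA : a = 0
    · by_cases hB : b = 0
      · have hC : c ≠ 0 := fun hC => habc ⟨hA, hB, hC⟩
        have : 0 < c ^ 2 := by positivity
        nlinarith [sq_nonneg a, sq_nonneg b]
      · have : 0 < b ^ 2 := by positivity
        nlinarith [sq_nonneg a, sq_nonneg c]
    · have : 0 < a ^ 2 := by positivity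
      nlinarith [sq_nonneg b, sq_nonneg c]
  simp only [M, x₁, x₂, x₃, dotProduct, Matrix.mulVec, Fin.sum_univ_three,
    Matrix.cons_val', Matrix.cons_val_zero, Matrix.cons_val_one, Matrix.head_cons,
    Matrix.empty_val', Matrix.cons_val_fin_one, Matrix.head_fin_const,
    Matrix.cons_val_two, Matrix.tail_cons, Matrix.of_apply]
  rw [ha, hb, hc] at hS
  nlinarith [hS]
end

section
/- Let θᵢ(l₁,l₂,l₃) = e^{(lᵢ − lⱼ − lₖ)/2} and xᵢ = (θⱼ + θₖ − θᵢ)/2 for {i,j,k} = {1,2,3}. Then ∂xᵢ/∂lᵢ = −(x₁+x₂+x₃)/2 and ∂xᵢ/∂lⱼ = xₖ/2 for i ≠ j. -/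
/-- The x-invariant of a decorated ideal triangle: `xinv a b c = (θ_b + θ_c - θ_a)/2`
where `θ_a = exp((a - b - c)/2)` is the generalized angle opposite the edge of length `a`. -/
noncomputable def xinv (a b c : ℝ) : ℝ :=
  (Real.exp ((b - c - a) / 2) + Real.exp ((c - a - b) / 2) - Real.exp ((a - b - c) / 2)) / 2

private lemma deriv1 (a b c : ℝ) :
    HasDerivAt (fun s => xinv s b c)
      ((Real.exp ((b - c - a) / 2) * (-1/2) + Real.exp ((c - a - b) / 2) * (-1/2)
        - Real.exp ((a - b - c) / 2) * (1/2)) / 2) a := by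
  have i1 : HasDerivAt (fun s : ℝ => (b - c - s) / 2) (-1/2) a := by
    simpa using ((hasDerivAt_id a).const_sub (b - c)).div_const 2
  have i2 : HasDerivAt (fun s : ℝ => (c - s - b) / 2) (-1/2) a := by
    simpa using (((hasDerivAt_id a).const_sub c).sub_const b).div_const 2
  have i3 : HasDerivAt (fun s : ℝ => (s - b - c) / 2) (1/2) a := by
    simpa using (((hasDerivAt_id a).sub_const b).sub_const c).div_const 2
  exact ((i1.exp.add i2.exp).sub i3.exp).div_const 2

private lemma deriv2 (a b c : ℝ) :
    HasDerivAt (fun s => xinv a s c)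
      ((Real.exp ((b - c - a) / 2) * (1/2) + Real.exp ((c - a - b) / 2) * (-1/2)
        - Real.exp ((a - b - c) / 2) * (-1/2)) / 2) b := by
  have i1 : HasDerivAt (fun s : ℝ => (s - c - a) / 2) (1/2) b := by
    simpa using (((hasDerivAt_id b).sub_const c).sub_const a).div_const 2
  have i2 : HasDerivAt (fun s : ℝ => (c - a - s) / 2) (-1/2) b := by
    simpa using ((hasDerivAt_id b).const_sub (c - a)).div_const 2
  have i3 : HasDerivAt (fun s : ℝ => (a - s - c) / 2) (-1/2) b := by
    simpa using (((hasDerivAt_id b).const_sub a).sub_const c).div_const 2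
  exact ((i1.exp.add i2.exp).sub i3.exp).div_const 2

private lemma deriv3 (a b c : ℝ) :
    HasDerivAt (fun s => xinv a b s)
      ((Real.exp ((b - c - a) / 2) * (-1/2) + Real.exp ((c - a - b) / 2) * (1/2)
        - Real.exp ((a - b - c) / 2) * (-1/2)) / 2) c := by
  have i1 : HasDerivAt (fun s : ℝ => (b - s - a) / 2) (-1/2) c := by
    simpa using (((hasDerivAt_id c).const_sub b).sub_const a).div_const 2
  have i2 : HasDerivAt (fun s : ℝ => (s - a - b) / 2) (1/2) c := by
    simpa using (((hasDerivAt_id c).sub_const a).sub_const b).div_const 2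
  have i3 : HasDerivAt (fun s : ℝ => (a - b - s) / 2) (-1/2) c := by
    simpa using ((hasDerivAt_id c).const_sub (a - b)).div_const 2
  exact ((i1.exp.add i2.exp).sub i3.exp).div_const 2

theorem stmt8 (l₁ l₂ l₃ : ℝ) :
    let x₁ := xinv l₁ l₂ l₃
    let x₂ := xinv l₂ l₃ l₁
    let x₃ := xinv l₃ l₁ l₂
    -- ∂xᵢ/∂lᵢ = −(x₁+x₂+x₃)/2
    HasDerivAt (fun s => xinv s l₂ l₃) (-(x₁ + x₂ + x₃) / 2) l₁ ∧
    HasDerivAt (fun s => xinv s l₃ l₁) (-(x₁ + x₂ + x₃) / 2) l₂ ∧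
    HasDerivAt (fun s => xinv s l₁ l₂) (-(x₁ + x₂ + x₃) / 2) l₃ ∧
    -- ∂x₁/∂l₂ = x₃/2 and ∂x₁/∂l₃ = x₂/2
    HasDerivAt (fun s => xinv l₁ s l₃) (x₃ / 2) l₂ ∧
    HasDerivAt (fun s => xinv l₁ l₂ s) (x₂ / 2) l₃ ∧
    -- ∂x₂/∂l₃ = x₁/2 and ∂x₂/∂l₁ = x₃/2
    HasDerivAt (fun s => xinv l₂ s l₁) (x₁ / 2) l₃ ∧
    HasDerivAt (fun s => xinv l₂ l₃ s) (x₃ / 2) l₁ ∧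
    -- ∂x₃/∂l₁ = x₂/2 and ∂x₃/∂l₂ = x₁/2
    HasDerivAt (fun s => xinv l₃ s l₂) (x₂ / 2) l₁ ∧
    HasDerivAt (fun s => xinv l₃ l₁ s) (x₁ / 2) l₂ := by
  refine ⟨?_, ?_, ?_, ?_, ?_, ?_, ?_, ?_, ?_⟩
  · have h := deriv1 l₁ l₂ l₃; convert h using 1; simp only [xinv]; ring
  · have h := deriv1 l₂ l₃ l₁; convert h using 1; simp only [xinv]; ring
  · have h := deriv1 l₃ l₁ l₂; convert h using 1; simp only [xinv]; ring
  · have h := deriv2 l₁ l₂ l₃; convert h using 1; simp only [xinv]; ring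
  · have h := deriv3 l₁ l₂ l₃; convert h using 1; simp only [xinv]; ring
  · have h := deriv2 l₂ l₃ l₁; convert h using 1; simp only [xinv]; ring
  · have h := deriv3 l₂ l₃ l₁; convert h using 1; simp only [xinv]; ring
  · have h := deriv2 l₃ l₁ l₂; convert h using 1; simp only [xinv]; ring
  · have h := deriv3 l₃ l₁ l₂; convert h using 1; simp only [xinv]; ring
end
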